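/- Let (E_n)_{n∈ℕ} be a real sequence, (κ_n)_{n∈ℕ} positive reals, and fix E ∈ ℝ. Suppose there is ε₀ > 0 such that ∑_n κ_n · exp(−(E_n−E)²/(2ε₀²)) converges, let d = min_n |E_n − E| (assumed attained), and suppose M(E) := ∑_{n' : |E_{n'}−E| = d} κ_{n'} is a finite sum over a finite nonempty index set. Then for each fixed index n, as ε → 0 from the right: if |E_n − E| > d, the ratio exp(−(E_n−E)²/(2ε²)) / (∑_{n'} κ_{n'} · exp(−(E_{n'}−E)²/(2ε²))) tends to 0; and if |E_n − E| = d, it tends to 1/M(E). -/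

import Mathlib

open Real Filter

lemma aux_exp_tendsto_zero {c : ℝ} (hc : 0 < c) :
    Tendsto (fun ε : ℝ => Real.exp (-c / (2 * ε ^ 2)))
      (nhdsWithin 0 (Set.Ioi 0)) (nhds 0) := by
  have h1 : Tendsto (fun ε : ℝ => ε ^ 2) (nhdsWithin 0 (Set.Ioi 0))
      (nhdsWithin 0 (Set.Ioi 0)) := by
    rw [tendsto_nhdsWithin_iff]
    constructor
    · have : Tendsto (fun ε : ℝ => ε ^ 2) (nhds 0) (nhds (0 ^ 2)) :=
        (continuous_pow 2).tendsto 0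
      simpa using this.mono_left nhdsWithin_le_nhds
    · filter_upwards [self_mem_nhdsWithin] with x hx using pow_pos (Set.mem_Ioi.mp hx) 2
  have h2 : Tendsto (fun ε : ℝ => (ε ^ 2)⁻¹) (nhdsWithin 0 (Set.Ioi 0)) atTop :=
    tendsto_inv_nhdsGT_zero.comp h1
  have h3 : Tendsto (fun ε : ℝ => (c / 2) * (ε ^ 2)⁻¹)
      (nhdsWithin 0 (Set.Ioi 0)) atTop :=
    h2.const_mul_atTop (by linarith)
  have h4 : Tendsto (fun ε : ℝ => -c / (2 * ε ^ 2))
      (nhdsWithin 0 (Set.Ioi 0)) atBot := by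
    have h5 := tendsto_neg_atTop_atBot.comp h3
    refine h5.congr fun ε => ?_
    simp only [Function.comp]
    ring
  exact Real.tendsto_exp_atBot.comp h4

theorem gaussian_weight_limit
    (En κ : ℕ → ℝ) (hκ : ∀ n, 0 < κ n) (E ε₀ : ℝ) (hε₀ : 0 < ε₀)
    (h : Summable fun n => κ n * Real.exp (-(En n - E) ^ 2 / (2 * ε₀ ^ 2)))
    (d : ℝ) (hd : ∀ n, d ≤ |En n - E|) (hd' : ∃ n, |En n - E| = d)
    (M : Finset ℕ) (hM : ∀ n', n' ∈ M ↔ |En n' - E| = d) (hMne : M.Nonempty)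
    (n : ℕ) :
    (|En n - E| > d →
      Tendsto
        (fun ε : ℝ =>
          Real.exp (-(En n - E) ^ 2 / (2 * ε ^ 2)) /
            (∑' n', κ n' * Real.exp (-(En n' - E) ^ 2 / (2 * ε ^ 2))))
        (nhdsWithin 0 (Set.Ioi 0)) (nhds 0)) ∧
    (|En n - E| = d →
      Tendsto
        (fun ε : ℝ =>
          Real.exp (-(En n - E) ^ 2 / (2 * ε ^ 2)) /
            (∑' n', κ n' * Real.exp (-(En n' - E) ^ 2 / (2 * ε ^ 2))))
        (nhdsWithin 0 (Set.Ioi 0)) (nhds (1 / ∑ n' ∈ M, κ n'))) := by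
  have hd0 : 0 ≤ d := by
    obtain ⟨m, hm⟩ := hd'
    rw [← hm]; exact abs_nonneg _
  have hsq : ∀ m, d ^ 2 ≤ (En m - E) ^ 2 := by
    intro m
    calc d ^ 2 ≤ |En m - E| ^ 2 := pow_le_pow_left₀ hd0 (hd m) 2
      _ = (En m - E) ^ 2 := sq_abs _
  set g : ℝ → ℕ → ℝ := fun ε m =>
    κ m * Real.exp (-((En m - E) ^ 2 - d ^ 2) / (2 * ε ^ 2)) with hg
  set a : ℕ → ℝ := fun m => if m ∈ M then κ m else 0 with ha
  have hfact : ∀ ε : ℝ, ε ∈ Set.Ioi (0:ℝ) →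
      (Real.exp (-(En n - E) ^ 2 / (2 * ε ^ 2)) /
        ∑' n', κ n' * Real.exp (-(En n' - E) ^ 2 / (2 * ε ^ 2)))
      = Real.exp (-((En n - E) ^ 2 - d ^ 2) / (2 * ε ^ 2)) / ∑' n', g ε n' := by
    intro ε hε
    have hterm : ∀ m, κ m * Real.exp (-(En m - E) ^ 2 / (2 * ε ^ 2))
        = Real.exp (-d ^ 2 / (2 * ε ^ 2)) * g ε m := by
      intro m
      have he : -(En m - E) ^ 2 / (2 * ε ^ 2)
          = -d ^ 2 / (2 * ε ^ 2) + -((En m - E) ^ 2 - d ^ 2) / (2 * ε ^ 2) := by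
        ring
      simp only [hg]
      rw [he, Real.exp_add]
      ring
    have hnum : Real.exp (-(En n - E) ^ 2 / (2 * ε ^ 2))
        = Real.exp (-d ^ 2 / (2 * ε ^ 2)) *
          Real.exp (-((En n - E) ^ 2 - d ^ 2) / (2 * ε ^ 2)) := by
      rw [← Real.exp_add]
      congr 1
      ring
    have hden : (∑' n', κ n' * Real.exp (-(En n' - E) ^ 2 / (2 * ε ^ 2)))
        = Real.exp (-d ^ 2 / (2 * ε ^ 2)) * ∑' n', g ε n' := by
      rw [← tsum_mul_left]
      exact tsum_congr hterm
    rw [hnum, hden, mul_div_mul_left _ _ (Real.exp_ne_zero _)]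
  have hS : (0:ℝ) < ∑ n' ∈ M, κ n' :=
    Finset.sum_pos (fun i _ => hκ i) hMne
  have htsum_a : (∑' m, a m) = ∑ n' ∈ M, κ n' := by
    rw [ha]
    exact (tsum_eq_sum (by intro m hm; simp [hm])).trans
      (Finset.sum_congr rfl (by intro m hm; simp [hm]))
  have hDen : Tendsto (fun ε => ∑' m, g ε m) (nhdsWithin 0 (Set.Ioi 0))
      (nhds (∑ n' ∈ M, κ n')) := by
    rw [← htsum_a]
    apply tendsto_tsum_of_dominated_convergence
      (bound := fun m => Real.exp (d ^ 2 / (2 * ε₀ ^ 2)) *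
        (κ m * Real.exp (-(En m - E) ^ 2 / (2 * ε₀ ^ 2))))
    · exact h.mul_left _
    · intro m
      by_cases hm : m ∈ M
      · have heq : (En m - E) ^ 2 = d ^ 2 := by
          rw [← sq_abs, (hM m).1 hm]
        simp only [hg, heq, sub_self, neg_zero, zero_div, Real.exp_zero, mul_one]
        simp only [ha, hm, if_pos]
        exact tendsto_const_nhds
      · have hlt : d < |En m - E| :=
          lt_of_le_of_ne (hd m) (fun he => hm ((hM m).2 he.symm))
        have hc : 0 < (En m - E) ^ 2 - d ^ 2 := by
          have h2 : d ^ 2 < |En m - E| ^ 2 :=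
            pow_lt_pow_left₀ hlt hd0 (by norm_num)
          rw [sq_abs] at h2; linarith
        have h3 := (aux_exp_tendsto_zero hc).const_mul (κ m)
        simpa [ha, hm, hg] using h3
    · have hIoc : Set.Ioc (0:ℝ) ε₀ ∈ nhdsWithin (0:ℝ) (Set.Ioi 0) := by
        apply mem_nhdsWithin_iff_exists_mem_nhds_inter.mpr
        refine ⟨Set.Iio ε₀, Iio_mem_nhds hε₀, ?_⟩
        rintro x ⟨hx1, hx2⟩
        exact ⟨hx2, le_of_lt hx1⟩
      filter_upwards [hIoc] with ε hε m
      have hε0 : 0 < ε := hε.1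
      have hεle : ε ≤ ε₀ := hε.2
      have hb : -((En m - E) ^ 2 - d ^ 2) / (2 * ε ^ 2)
          ≤ -((En m - E) ^ 2 - d ^ 2) / (2 * ε₀ ^ 2) := by
        rw [neg_div, neg_div, neg_le_neg_iff]
        apply div_le_div_of_nonneg_left (by linarith [hsq m]) (by positivity)
        have h2 : ε ^ 2 ≤ ε₀ ^ 2 := by nlinarith
        linarith
      have hle : g ε m ≤ Real.exp (d ^ 2 / (2 * ε₀ ^ 2)) *
          (κ m * Real.exp (-(En m - E) ^ 2 / (2 * ε₀ ^ 2))) := by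
        simp only [hg]
        calc κ m * Real.exp (-((En m - E) ^ 2 - d ^ 2) / (2 * ε ^ 2))
            ≤ κ m * Real.exp (-((En m - E) ^ 2 - d ^ 2) / (2 * ε₀ ^ 2)) :=
              mul_le_mul_of_nonneg_left (Real.exp_le_exp.mpr hb) (hκ m).le
          _ = Real.exp (d ^ 2 / (2 * ε₀ ^ 2)) *
              (κ m * Real.exp (-(En m - E) ^ 2 / (2 * ε₀ ^ 2))) := by
              rw [mul_comm (Real.exp _), mul_assoc, ← Real.exp_add]
              congr 2
              ring
      have hpos : 0 ≤ g ε m := mul_nonneg (hκ m).le (Real.exp_nonneg _)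
      rw [Real.norm_eq_abs, abs_of_nonneg hpos]
      exact hle
  constructor
  · intro hgt
    have hc : 0 < (En n - E) ^ 2 - d ^ 2 := by
      have h2 : d ^ 2 < |En n - E| ^ 2 := pow_lt_pow_left₀ hgt hd0 (by norm_num)
      rw [sq_abs] at h2; linarith
    have hNum := aux_exp_tendsto_zero hc
    have hdiv := hNum.div hDen (ne_of_gt hS)
    rw [zero_div] at hdiv
    refine hdiv.congr' ?_
    filter_upwards [self_mem_nhdsWithin] with ε hε
    simp only [Pi.div_apply]
    exact (hfact ε hε).symm
  · intro heq
    have hsqeq : (En n - E) ^ 2 = d ^ 2 := by rw [← sq_abs, heq]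
    have hNum : Tendsto (fun ε : ℝ =>
        Real.exp (-((En n - E) ^ 2 - d ^ 2) / (2 * ε ^ 2)))
        (nhdsWithin 0 (Set.Ioi 0)) (nhds 1) := by
      simp only [hsqeq, sub_self, neg_zero, zero_div, Real.exp_zero]
      exact tendsto_const_nhds
    have hdiv := hNum.div hDen (ne_of_gt hS)
    refine hdiv.congr' ?_
    filter_upwards [self_mem_nhdsWithin] with ε hε
    simp only [Pi.div_apply]
    exact (hfact ε hε).symm
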